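/- Let ρₗ, ρᵣ, a₁ˡ, a₁ʳ, bˡ, bʳ, cˡ, cʳ be positive reals, â₁, â₂, â₃ real with â₁ ≠ 0, and let v₁,…,v₉ ∈ ℝ⁹ be the vectors v₁ = e₁ + √(ρₗ a₁ˡ) e₇, v₂ = e₁ − √(ρᵣ a₁ʳ) e₇, v₃ = e₄ + √(2ρₗ bˡ) e₈, v₄ = e₄ − √(2ρᵣ bʳ) e₈, v₅ = e₆ + √(2ρₗ cˡ) e₉, v₆ = e₆ − √(2ρᵣ cʳ) e₉, v₇ = −â₂e₁ + â₁e₂, v₈ = −â₃e₁ + â₁e₃, v₉ = e₅. Suppose Δf ∈ ℝ⁹ has its second, third, and fifth components equal to zero, and suppose Δf = Σ_{p=1}^{9} βᵖ vᵖ for real coefficients β¹,…,β⁹. Then β⁷ = β⁸ = β⁹ = 0. -/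
import Mathlib


open Real

/-- The nine wave vectors of the f-wave Riemann solver for the heterogeneous
Lagrangian fluid–solid system: the left-going eigenvectors `v₁, v₃, v₅` built from
the left state `(ρₗ, a₁ˡ, bˡ, cˡ)`, the right-going eigenvectors `v₂, v₄, v₆` built
from the right state `(ρᵣ, a₁ʳ, bʳ, cʳ)`, and the zero-speed eigenvectors
`v₇ = −â₂e₁ + â₁e₂`, `v₈ = −â₃e₁ + â₁e₃`, `v₉ = e₅`. -/
noncomputable def fwaveVecs (ρl ρr a1l a1r bl br cl cr ah₁ ah₂ ah₃ : ℝ) :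
    Fin 9 → (Fin 9 → ℝ) :=
  ![![1, 0, 0, 0, 0, 0, Real.sqrt (ρl * a1l), 0, 0],
    ![1, 0, 0, 0, 0, 0, -Real.sqrt (ρr * a1r), 0, 0],
    ![0, 0, 0, 1, 0, 0, 0, Real.sqrt (2 * ρl * bl), 0],
    ![0, 0, 0, 1, 0, 0, 0, -Real.sqrt (2 * ρr * br), 0],
    ![0, 0, 0, 0, 0, 1, 0, 0, Real.sqrt (2 * ρl * cl)],
    ![0, 0, 0, 0, 0, 1, 0, 0, -Real.sqrt (2 * ρr * cr)],
    ![-ah₂, ah₁, 0, 0, 0, 0, 0, 0, 0],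
    ![-ah₃, 0, ah₁, 0, 0, 0, 0, 0, 0],
    ![0, 0, 0, 0, 1, 0, 0, 0, 0]]

/-- If the flux difference `Δf` has vanishing second, third and fifth components
(0-indexed: components 1, 2, 4) and `Δf = Σ βᵖ vᵖ`, then the coefficients of the
three zero-speed waves vanish: `β⁷ = β⁸ = β⁹ = 0`. -/
theorem fwave_zero_speed_coeffs_vanish (ρl ρr a1l a1r bl br cl cr ah₁ ah₂ ah₃ : ℝ)
    (hρl : 0 < ρl) (hρr : 0 < ρr) (ha1l : 0 < a1l) (ha1r : 0 < a1r)
    (hbl : 0 < bl) (hbr : 0 < br) (hcl : 0 < cl) (hcr : 0 < cr) (hah₁ : ah₁ ≠ 0)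
    (Δf : Fin 9 → ℝ) (h1 : Δf 1 = 0) (h2 : Δf 2 = 0) (h4 : Δf 4 = 0)
    (β : Fin 9 → ℝ)
    (hdecomp : Δf = ∑ p : Fin 9, β p • fwaveVecs ρl ρr a1l a1r bl br cl cr ah₁ ah₂ ah₃ p) :
    β 6 = 0 ∧ β 7 = 0 ∧ β 8 = 0 := by
  have e1 := congrFun hdecomp 1
  have e2 := congrFun hdecomp 2
  have e4 := congrFun hdecomp 4
  simp [fwaveVecs, Fin.sum_univ_succ, h1, h2, h4] at e1 e2 e4
  exact ⟨e1.resolve_right hah₁, e2.resolve_right hah₁, e4.symm⟩
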